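/- arXiv:1910.07274 — 4 statements merged into one kernel-verified Lean document; each statement's English description precedes it below -/
import Mathlib

section
/- Suppose a finite positive measure μ on [-1,1] admits a quadrature ∫ f dμ = w_{k+1} f(1) + Σ_{i=1}^k w_i f(x_i) exact for polynomials of degree ≤ 2k with all weights positive and nodes satisfying -1 ≤ ℓ < x_1 < ... < x_k < s < 1. Then the signed measure dν(t) = (t-ℓ)(s-t)(1-t) dμ(t) is positive definite up to degree k-2: ∫ p²(t)(t-ℓ)(s-t)(1-t) dμ(t) > 0 for every nonzero polynomial p of degree ≤ k-2. -/
open MeasureTheory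

/-- Suppose a finite positive measure `μ` on `[-1,1]` admits a quadrature formula
`∫ f dμ = w_{k+1} f(1) + Σ_{i=1}^k w_i f(x_i)` exact for all polynomials of degree `≤ 2k`,
with positive weights and nodes satisfying `-1 ≤ ℓ < x_1 < ... < x_k < s < 1`.
Then the signed measure `(t-ℓ)(s-t)(1-t) dμ(t)` is positive definite up to degree `k-2`:
`∫ p²(t)(t-ℓ)(s-t)(1-t) dμ(t) > 0` for every nonzero polynomial `p` of degree `≤ k-2`. -/
theorem posdef_weighted_measure_ell_s (k : ℕ) (hk : 2 ≤ k)
    (μ : Measure ℝ) [IsFiniteMeasure μ] (hsupp : μ (Set.Icc (-1 : ℝ) 1)ᶜ = 0)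
    (hint : ∀ p : Polynomial ℝ, Integrable (fun t => p.eval t) μ)
    (ℓ s : ℝ) (w x : ℕ → ℝ)
    (hw : ∀ i, 1 ≤ i → i ≤ k + 1 → 0 < w i)
    (hℓ : -1 ≤ ℓ)
    (hℓx : ∀ i, 1 ≤ i → i ≤ k → ℓ < x i)
    (hxs : ∀ i, 1 ≤ i → i ≤ k → x i < s)
    (hs : s < 1)
    (hmono : ∀ i j, 1 ≤ i → i < j → j ≤ k → x i < x j)
    (hquad : ∀ p : Polynomial ℝ, p.natDegree ≤ 2 * k →
      (∫ t, p.eval t ∂μ) = w (k + 1) * p.eval 1 + ∑ i ∈ Finset.Icc 1 k, w i * p.eval (x i))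
    (p : Polynomial ℝ) (hp : p ≠ 0) (hdeg : p.natDegree ≤ k - 2) :
    0 < ∫ t, (p.eval t) ^ 2 * (t - ℓ) * (s - t) * (1 - t) ∂μ := by
  classical
  set q : Polynomial ℝ :=
    p ^ 2 * (Polynomial.X - Polynomial.C ℓ) * (Polynomial.C s - Polynomial.X) *
      (1 - Polynomial.X) with hq
  have heval : ∀ t : ℝ, q.eval t = (p.eval t) ^ 2 * (t - ℓ) * (s - t) * (1 - t) := by
    intro t; simp [hq]
  have hqdeg : q.natDegree ≤ 2 * k := by
    have h1 : (Polynomial.X - Polynomial.C ℓ : Polynomial ℝ).natDegree ≤ 1 :=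
      Polynomial.natDegree_X_sub_C_le ℓ
    have h2 : (Polynomial.C s - Polynomial.X : Polynomial ℝ).natDegree ≤ 1 := by
      refine (Polynomial.natDegree_sub_le _ _).trans ?_
      simp
    have h3 : (1 - Polynomial.X : Polynomial ℝ).natDegree ≤ 1 := by
      refine (Polynomial.natDegree_sub_le _ _).trans ?_
      simp
    have hp2 : (p ^ 2).natDegree ≤ 2 * (k - 2) := by
      refine (Polynomial.natDegree_pow_le).trans ?_
      omega
    have hA := Polynomial.natDegree_mul_le (p := p ^ 2) (q := Polynomial.X - Polynomial.C ℓ)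
    have hB := Polynomial.natDegree_mul_le
      (p := p ^ 2 * (Polynomial.X - Polynomial.C ℓ)) (q := Polynomial.C s - Polynomial.X)
    have hC := Polynomial.natDegree_mul_le
      (p := p ^ 2 * (Polynomial.X - Polynomial.C ℓ) * (Polynomial.C s - Polynomial.X))
      (q := (1 : Polynomial ℝ) - Polynomial.X)
    rw [hq]
    omega
  have hkey := hquad q hqdeg
  have hq1 : q.eval 1 = 0 := by simp [heval]
  have hinteq : (∫ t, (p.eval t) ^ 2 * (t - ℓ) * (s - t) * (1 - t) ∂μ) =
      ∑ i ∈ Finset.Icc 1 k, w i * q.eval (x i) := by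
    rw [show (fun t => (p.eval t) ^ 2 * (t - ℓ) * (s - t) * (1 - t)) = fun t => q.eval t from
      funext fun t => (heval t).symm] at *
    rw [hkey, hq1, mul_zero, zero_add]
  rw [hinteq]
  -- injectivity of nodes on Icc 1 k
  have hinj : Set.InjOn x (Finset.Icc 1 k : Finset ℕ) := by
    intro i hi j hj hij
    simp only [Finset.coe_Icc, Set.mem_Icc] at hi hj
    by_contra hne
    rcases lt_or_gt_of_ne hne with h | h
    · exact absurd hij (ne_of_lt (hmono i j hi.1 h hj.2))
    · exact absurd hij.symm (ne_of_lt (hmono j i hj.1 h hi.2))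
  have hex : ∃ i ∈ Finset.Icc 1 k, p.eval (x i) ≠ 0 := by
    by_contra hall
    push_neg at hall
    apply hp
    refine Polynomial.eq_zero_of_natDegree_lt_card_of_eval_eq_zero' p
      ((Finset.Icc 1 k).image x) ?_ ?_
    · intro y hy
      obtain ⟨i, hi, rfl⟩ := Finset.mem_image.mp hy
      exact hall i hi
    · rw [Finset.card_image_of_injOn hinj]
      simp only [Nat.card_Icc]
      omega
  obtain ⟨i0, hi0, hpi0⟩ := hex
  refine Finset.sum_pos' ?_ ⟨i0, hi0, ?_⟩
  · intro i hi
    simp only [Finset.mem_Icc] at hi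
    have h1 := hℓx i hi.1 hi.2
    have h2 := hxs i hi.1 hi.2
    have hw' := hw i hi.1 (by omega)
    rw [heval]
    have := sq_nonneg (p.eval (x i))
    apply mul_nonneg hw'.le
    apply mul_nonneg (mul_nonneg (mul_nonneg this (by linarith)) (by linarith)) (by linarith)
  · simp only [Finset.mem_Icc] at hi0
    have h1 := hℓx i0 hi0.1 hi0.2
    have h2 := hxs i0 hi0.1 hi0.2
    have hw' := hw i0 hi0.1 (by omega)
    rw [heval]
    have hsq : (0:ℝ) < (p.eval (x i0)) ^ 2 := by positivity
    apply mul_pos hw'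
    apply mul_pos (mul_pos (mul_pos hsq (by linarith)) (by linarith)) (by linarith)
end

section
/- Suppose a positive measure μ_n (the Krawtchouk orthogonality measure) admits the Radau-type quadrature f_0 = ∫ f dμ_n = ρ_{k+1} f(1) + Σ_{i=0}^k ρ_i f(α_i), exact for polynomials of degree ≤ 2k, with all ρ_i > 0 (0 ≤ i ≤ k+1) and nodes ℓ = α_0 < α_1 < ... < α_k = s < 1. If f ∈ F_{n,ℓ,s} is any polynomial of degree ≤ 2k with Krawtchouk coefficients f_0 > 0, f_i ≥ 0 (i ≥ 1) and f(t) ≤ 0 on [ℓ,s], then f(1)/f_0 ≥ 1/ρ_{k+1}. In other words, no polynomial of degree at most 2k in F_{n,ℓ,s} gives a Delsarte LP bound better than L = 1/ρ_{k+1}. -/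
open MeasureTheory

/-- Suppose the Krawtchouk orthogonality measure `μ` admits a Radau-type quadrature
`f_0 = ∫ f dμ = ρ_{k+1} f(1) + Σ_{i=0}^k ρ_i f(α_i)`, exact for polynomials of degree
`≤ 2k`, with all `ρ_i > 0` and nodes `ℓ = α_0 < ... < α_k = s < 1`. If `f` is any
polynomial of degree `≤ 2k` with Krawtchouk coefficients `f_0 > 0`, `f_i ≥ 0` (`i ≥ 1`)
and `f(t) ≤ 0` on `[ℓ,s]`, then `f(1)/f_0 ≥ 1/ρ_{k+1}`: no polynomial of degree at most
`2k` in `F_{n,ℓ,s}` gives a Delsarte LP bound better than `L = 1/ρ_{k+1}`. -/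
theorem delsarte_lp_first_level_optimality (k : ℕ) (hk : 1 ≤ k)
    (μ : Measure ℝ) [IsFiniteMeasure μ]
    (hint : ∀ p : Polynomial ℝ, Integrable (fun t => p.eval t) μ)
    (ℓ s : ℝ) (α ρ : ℕ → ℝ)
    (hα0 : α 0 = ℓ) (hαk : α k = s) (hs1 : s < 1)
    (hmono : ∀ i j, i < j → j ≤ k → α i < α j)
    (hρ : ∀ i, i ≤ k + 1 → 0 < ρ i)
    (hquad : ∀ p : Polynomial ℝ, p.natDegree ≤ 2 * k →
      (∫ t, p.eval t ∂μ) = ρ (k + 1) * p.eval 1 + ∑ i ∈ Finset.range (k + 1), ρ i * p.eval (α i))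
    (Q : ℕ → Polynomial ℝ)
    (hQdeg : ∀ i, (Q i).natDegree = i) (hQ1 : ∀ i, (Q i).eval 1 = 1)
    (c : ℕ → ℝ) (hc0 : 0 < c 0) (hci : ∀ i, 1 ≤ i → 0 ≤ c i)
    (f : Polynomial ℝ)
    (hf : f = ∑ i ∈ Finset.range (2 * k + 1), Polynomial.C (c i) * Q i)
    (hfzero : c 0 = ∫ t, f.eval t ∂μ)
    (hfneg : ∀ t ∈ Set.Icc ℓ s, f.eval t ≤ 0) :
    1 / ρ (k + 1) ≤ f.eval 1 / c 0 := by
  have hdeg : f.natDegree ≤ 2 * k := by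
    rw [hf]
    refine (Polynomial.natDegree_sum_le _ _).trans ?_
    rw [Finset.fold_max_le]
    refine ⟨Nat.zero_le _, fun i hi => ?_⟩
    refine (Polynomial.natDegree_mul_le).trans ?_
    have := Finset.mem_range.mp hi
    simp [Polynomial.natDegree_C, hQdeg i]
    omega
  have hmem : ∀ i ≤ k, α i ∈ Set.Icc ℓ s := by
    intro i hi
    constructor
    · rw [← hα0]
      rcases Nat.eq_zero_or_pos i with h | h
      · simp [h]
      · exact (hmono 0 i h hi).le
    · rw [← hαk]
      rcases eq_or_lt_of_le hi with h | h
      · simp [h]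
      · exact (hmono i k h le_rfl).le
  have hq := hquad f hdeg
  rw [← hfzero] at hq
  have hsum : ∑ i ∈ Finset.range (k + 1), ρ i * f.eval (α i) ≤ 0 := by
    refine Finset.sum_nonpos fun i hi => ?_
    have hik : i ≤ k := Nat.lt_succ_iff.mp (Finset.mem_range.mp hi)
    exact mul_nonpos_of_nonneg_of_nonpos (hρ i (by omega)).le (hfneg _ (hmem i hik))
  have hρk := hρ (k + 1) le_rfl
  have h1 : c 0 ≤ ρ (k + 1) * f.eval 1 := by linarith
  rw [div_le_div_iff₀ hρk hc0]
  nlinarith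
end

section
/- In the setting of the Radau quadrature f_0 = ρ_{k+1} f(1) + Σ_{i=0}^k ρ_i f(α_i) exact for degree ≤ 2k with ρ_i > 0 and nodes in [ℓ, 1), set M = 1/ρ_{k+1} and define R_j = 1/M + Σ_{i=0}^k ρ_i Q_j(α_i). If R_j ≥ 0 for every j ≥ 2k+1, then for every polynomial g of any degree with Krawtchouk expansion g = Σ_j g_j Q_j satisfying g_j ≥ 0 for j ≥ 1 and g(α_i) ≤ h(α_i) for i = 0,...,k, one has M g_0 - g(1) ≤ M Σ_{i=0}^k ρ_i h(α_i). That is, no feasible LP polynomial beats the universal lower bound M² Σ ρ_i h(α_i). -/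
/-!
The Radau rule `L p = ρ_{k+1} p(1) + Σ_{i ≤ k} ρ_i p(α_i)` is a linear functional on
polynomials with `L 1 = 1` and `L (Q_j) ≥ 0` for `j ≥ 1`: for `j ≤ 2k` the rule is exact and
`∫ Q_j dμ = 0`, while for `j ≥ 2k+1` one has `L (Q_j) = R_j ≥ 0`. Since `g_j ≥ 0` for `j ≥ 1`,
this gives `g_0 ≤ L g ≤ ρ_{k+1} g(1) + Σ ρ_i h(α_i)`, and multiplying by `M = 1/ρ_{k+1}` is the
claim.
-/

open MeasureTheory Polynomial Finset

theorem le_map_sum_smul_of_nonneg {R V : Type*} [CommSemiring R] [PartialOrder R]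
    [IsOrderedRing R] [AddCommMonoid V] [Module R V] (L : V →ₗ[R] R) (Q : ℕ → V)
    (hL0 : L (Q 0) = 1) (hL : ∀ j, 1 ≤ j → 0 ≤ L (Q j)) (c : ℕ → R)
    (hc : ∀ j, 1 ≤ j → 0 ≤ c j) (N : ℕ) :
    c 0 ≤ L (∑ j ∈ range (N + 1), c j • Q j) := by
  have htail : 0 ≤ ∑ j ∈ range N, c (j + 1) * L (Q (j + 1)) :=
    sum_nonneg fun j _ => mul_nonneg (hc _ j.succ_pos) (hL _ j.succ_pos)
  simpa [map_sum, sum_range_succ', hL0] using le_add_of_nonneg_left htail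

noncomputable def radauFunctional (k : ℕ) (α ρ : ℕ → ℝ) : ℝ[X] →ₗ[ℝ] ℝ :=
  ρ (k + 1) • leval 1 + ∑ i ∈ range (k + 1), ρ i • leval (α i)

@[simp]
theorem radauFunctional_apply (k : ℕ) (α ρ : ℕ → ℝ) (p : ℝ[X]) :
    radauFunctional k α ρ p = ρ (k + 1) * p.eval 1 + ∑ i ∈ range (k + 1), ρ i * p.eval (α i) := by
  simp [radauFunctional, LinearMap.sum_apply]

section RadauQuadrature

variable {μ : Measure ℝ} {k : ℕ} {α ρ : ℕ → ℝ}
  (hquad : ∀ p : ℝ[X], p.natDegree ≤ 2 * k → ∫ t, p.eval t ∂μ = radauFunctional k α ρ p)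
include hquad

theorem radauFunctional_one [IsProbabilityMeasure μ] : radauFunctional k α ρ 1 = 1 := by
  simpa using (hquad 1 (by simp)).symm

theorem radauFunctional_nonneg_of_integral_eq_zero {q : ℝ[X]} (hq1 : q.eval 1 = 1)
    (hqint : ∫ t, q.eval t ∂μ = 0)
    (hR : 2 * k + 1 ≤ q.natDegree →
      0 ≤ ρ (k + 1) + ∑ i ∈ range (k + 1), ρ i * q.eval (α i)) :
    0 ≤ radauFunctional k α ρ q := by
  by_cases hdeg : q.natDegree ≤ 2 * k
  · rw [← hquad q hdeg, hqint]
  · simpa [hq1] using hR (by omega)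

end RadauQuadrature

theorem energy_lp_first_level_optimality_general (k : ℕ)
    (μ : Measure ℝ) [IsProbabilityMeasure μ]
    (α ρ : ℕ → ℝ)
    (hρ : ∀ i, i ≤ k + 1 → 0 < ρ i)
    (hquad : ∀ p : Polynomial ℝ, p.natDegree ≤ 2 * k →
      (∫ t, p.eval t ∂μ) = ρ (k + 1) * p.eval 1 + ∑ i ∈ Finset.range (k + 1), ρ i * p.eval (α i))
    (M : ℝ) (hM : M = 1 / ρ (k + 1))
    (Q : ℕ → Polynomial ℝ)
    (hQdeg : ∀ i, (Q i).natDegree = i) (hQ1 : ∀ i, (Q i).eval 1 = 1)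
    (hQ0 : Q 0 = 1)
    (hQint : ∀ j, 1 ≤ j → (∫ t, (Q j).eval t ∂μ) = 0)
    (hR : ∀ j, 2 * k + 1 ≤ j →
      0 ≤ 1 / M + ∑ i ∈ Finset.range (k + 1), ρ i * (Q j).eval (α i))
    (h : ℝ → ℝ) (N : ℕ) (gc : ℕ → ℝ) (hgci : ∀ j, 1 ≤ j → 0 ≤ gc j)
    (g : Polynomial ℝ)
    (hg : g = ∑ j ∈ Finset.range (N + 1), Polynomial.C (gc j) * Q j)
    (hgh : ∀ i, i ≤ k → g.eval (α i) ≤ h (α i)) :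
    M * gc 0 - g.eval 1 ≤ M * ∑ i ∈ Finset.range (k + 1), ρ i * h (α i) := by
  replace hquad : ∀ p : ℝ[X], p.natDegree ≤ 2 * k →
      ∫ t, p.eval t ∂μ = radauFunctional k α ρ p := by simpa using hquad
  have hLQ : ∀ j, 1 ≤ j → 0 ≤ radauFunctional k α ρ (Q j) := fun j hj =>
    radauFunctional_nonneg_of_integral_eq_zero hquad (hQ1 j) (hQint j hj) fun hjk => by
      simpa [hM] using hR j (by rwa [hQdeg] at hjk)
  have hg0 : gc 0 ≤ radauFunctional k α ρ g := by
    simpa [hg, C_mul'] using le_map_sum_smul_of_nonneg _ Q (hQ0 ▸ radauFunctional_one hquad)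
      hLQ gc hgci N
  have hnodes_le : ∑ i ∈ range (k + 1), ρ i * g.eval (α i) ≤ ∑ i ∈ range (k + 1), ρ i * h (α i) :=
    sum_le_sum fun i hi => mul_le_mul_of_nonneg_left (hgh i (by simpa [Nat.lt_succ_iff] using hi))
      (hρ i (by simp at hi; omega)).le
  have hρ1 := hρ (k + 1) le_rfl
  rw [radauFunctional_apply] at hg0
  calc M * gc 0 - g.eval 1
      ≤ M * (ρ (k + 1) * g.eval 1 + ∑ i ∈ range (k + 1), ρ i * h (α i)) - g.eval 1 := by
        gcongr
        · rw [hM]; positivity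
        · linarith
    _ = M * ∑ i ∈ range (k + 1), ρ i * h (α i) := by rw [hM]; field_simp; ring

/-- In the setting of the Radau quadrature `f_0 = ρ_{k+1} f(1) + Σ_{i=0}^k ρ_i f(α_i)`
exact for degree `≤ 2k` with `ρ_i > 0` and nodes in `[ℓ, 1)`, set `M = 1/ρ_{k+1}` and
`R_j = 1/M + Σ_{i=0}^k ρ_i Q_j(α_i)`. If `R_j ≥ 0` for every `j ≥ 2k+1`, then every
polynomial `g = Σ_j g_j Q_j` with `g_j ≥ 0` for `j ≥ 1` and `g(α_i) ≤ h(α_i)` for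
`i = 0,...,k` satisfies `M g_0 - g(1) ≤ M Σ_{i=0}^k ρ_i h(α_i)`: no feasible LP
polynomial beats the universal lower bound `M² Σ ρ_i h(α_i)`. -/
theorem energy_lp_first_level_optimality (k : ℕ) (hk : 1 ≤ k)
    (μ : Measure ℝ) [IsProbabilityMeasure μ]
    (hint : ∀ p : Polynomial ℝ, Integrable (fun t => p.eval t) μ)
    (ℓ : ℝ) (α ρ : ℕ → ℝ)
    (hnodes : ∀ i, i ≤ k → α i ∈ Set.Ico ℓ 1)
    (hρ : ∀ i, i ≤ k + 1 → 0 < ρ i)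
    (hquad : ∀ p : Polynomial ℝ, p.natDegree ≤ 2 * k →
      (∫ t, p.eval t ∂μ) = ρ (k + 1) * p.eval 1 + ∑ i ∈ Finset.range (k + 1), ρ i * p.eval (α i))
    (M : ℝ) (hM : M = 1 / ρ (k + 1))
    (Q : ℕ → Polynomial ℝ)
    (hQdeg : ∀ i, (Q i).natDegree = i) (hQ1 : ∀ i, (Q i).eval 1 = 1)
    (hQ0 : Q 0 = 1)
    (hQint : ∀ j, 1 ≤ j → (∫ t, (Q j).eval t ∂μ) = 0)
    (hR : ∀ j, 2 * k + 1 ≤ j →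
      0 ≤ 1 / M + ∑ i ∈ Finset.range (k + 1), ρ i * (Q j).eval (α i))
    (h : ℝ → ℝ) (N : ℕ) (gc : ℕ → ℝ) (hgci : ∀ j, 1 ≤ j → 0 ≤ gc j)
    (g : Polynomial ℝ)
    (hg : g = ∑ j ∈ Finset.range (N + 1), Polynomial.C (gc j) * Q j)
    (hgh : ∀ i, i ≤ k → g.eval (α i) ≤ h (α i)) :
    M * gc 0 - g.eval 1 ≤ M * ∑ i ∈ Finset.range (k + 1), ρ i * h (α i) :=
  energy_lp_first_level_optimality_general k μ α ρ hρ hquad M hM Q hQdeg hQ1 hQ0 hQint hR h N gc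
    hgci g hg hgh
end

section
/- (Distance distribution of attaining codes) Let C ⊂ F_q^n be a code with |C| = 1/ρ_{k+1} that is a 2k-design and whose distinct-point inner products all lie in {α_0, ..., α_k}, where (ρ_i, α_i) are the parameters of a quadrature f_0 = ρ_{k+1} f(1) + Σ_{i=0}^k ρ_i f(α_i) exact for degree ≤ 2k with distinct nodes α_0 < ... < α_k < 1. Then for every x ∈ C and every i, the number of y ∈ C with ⟨x,y⟩ = α_i equals ρ_i |C|; in particular it is independent of x. -/
open MeasureTheory
open scoped Classical

/-- The "inner product" `⟨x,y⟩ = 1 - 2 d(x,y)/n` of two words of `F_q^n`,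
where `d` is the Hamming distance. -/
noncomputable def innerProd (n q : ℕ) (x y : Fin n → Fin q) : ℝ :=
  1 - 2 * (hammingDist x y : ℝ) / (n : ℝ)

/-- (Distance distribution of attaining codes) Let `C ⊂ F_q^n` be a code with
`|C| = 1/ρ_{k+1}` that is a `2k`-design and whose distinct-point inner products all
lie in `{α_0, ..., α_k}`, where `(ρ_i, α_i)` come from a quadrature
`f_0 = ρ_{k+1} f(1) + Σ_{i=0}^k ρ_i f(α_i)` exact for degree `≤ 2k` with distinct nodes
`α_0 < ... < α_k < 1`. Then for every `x ∈ C` and every `i ≤ k`, the number of `y ∈ C`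
with `⟨x,y⟩ = α_i` equals `ρ_i |C|`; in particular it is independent of `x`. -/
theorem distance_distribution_of_attaining_codes (n q k : ℕ) (hn : 1 ≤ n) (hq : 2 ≤ q)
    (μ : Measure ℝ) [IsProbabilityMeasure μ]
    (hint : ∀ p : Polynomial ℝ, Integrable (fun t => p.eval t) μ)
    (α ρ : ℕ → ℝ)
    (hmono : ∀ i j, i < j → j ≤ k → α i < α j)
    (hlt1 : ∀ i, i ≤ k → α i < 1)
    (hquad : ∀ p : Polynomial ℝ, p.natDegree ≤ 2 * k →
      (∫ t, p.eval t ∂μ) = ρ (k + 1) * p.eval 1 + ∑ i ∈ Finset.range (k + 1), ρ i * p.eval (α i))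
    (C : Finset (Fin n → Fin q))
    (hcard : (C.card : ℝ) = 1 / ρ (k + 1))
    (hdesign : ∀ x : Fin n → Fin q, ∀ p : Polynomial ℝ, p.natDegree ≤ 2 * k →
      ∑ y ∈ C, p.eval (innerProd n q x y) = (∫ t, p.eval t ∂μ) * C.card)
    (hips : ∀ x ∈ C, ∀ y ∈ C, x ≠ y → ∃ i ≤ k, innerProd n q x y = α i) :
    ∀ x ∈ C, ∀ i, i ≤ k →
      ((C.filter (fun y => innerProd n q x y = α i)).card : ℝ) = ρ i * C.card := by
  intro x hx i hik
  -- basic facts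
  have hipxx : innerProd n q x x = 1 := by
    simp [innerProd, hammingDist_self]
  have hinj : Set.InjOn α (Finset.range (k + 1)) := by
    intro a ha b hb hab
    simp only [Finset.coe_range, Set.mem_Iio] at ha hb
    by_contra hne
    rcases Nat.lt_or_ge a b with h | h
    · exact absurd hab (ne_of_lt (hmono a b h (Nat.lt_succ_iff.mp hb)))
    · have : b < a := lt_of_le_of_ne h (Ne.symm hne)
      exact absurd hab.symm (ne_of_lt (hmono b a this (Nat.lt_succ_iff.mp ha)))
  have hi : i ∈ Finset.range (k + 1) := Finset.mem_range.mpr (Nat.lt_succ_iff.mpr hik)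
  set p : Polynomial ℝ := Lagrange.basis (Finset.range (k + 1)) α i with hp
  have hdeg : p.natDegree ≤ 2 * k := by
    rw [hp, Lagrange.natDegree_basis hinj hi, Finset.card_range]
    omega
  -- ρ (k+1) * |C| = 1
  have hcardpos : 0 < (C.card : ℝ) := by
    exact_mod_cast Finset.card_pos.mpr ⟨x, hx⟩
  have hrk : ρ (k + 1) ≠ 0 := by
    intro h
    rw [h, div_zero] at hcard
    exact hcardpos.ne' hcard
  have hone : ρ (k + 1) * (C.card : ℝ) = 1 := by
    rw [hcard]; field_simp
  -- evaluate the quadrature on the Lagrange basis polynomial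
  have hquadp : (∫ t, p.eval t ∂μ) = ρ (k + 1) * p.eval 1 + ρ i := by
    rw [hquad p hdeg]
    congr 1
    rw [Finset.sum_eq_single i]
    · rw [hp, Lagrange.eval_basis_self hinj hi, mul_one]
    · intro j hj hji
      rw [hp, Lagrange.eval_basis_of_ne hji.symm hj, mul_zero]
    · intro h; exact absurd hi h
  -- the design sum
  have hsum := hdesign x p hdeg
  -- split off the x term
  have hsplit : ∑ y ∈ C, p.eval (innerProd n q x y)
      = p.eval 1 + ∑ y ∈ C.erase x, p.eval (innerProd n q x y) := by
    rw [← Finset.add_sum_erase C _ hx, hipxx]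
  -- each remaining term is the indicator of inner product = α i
  have hterm : ∀ y ∈ C.erase x, p.eval (innerProd n q x y)
      = if innerProd n q x y = α i then 1 else 0 := by
    intro y hy
    obtain ⟨hyx, hyC⟩ := Finset.mem_erase.mp hy
    obtain ⟨j, hjk, hj⟩ := hips x hx y hyC (Ne.symm hyx)
    have hjmem : j ∈ Finset.range (k + 1) := Finset.mem_range.mpr (Nat.lt_succ_iff.mpr hjk)
    by_cases hcase : innerProd n q x y = α i
    · rw [if_pos hcase, hcase, hp, Lagrange.eval_basis_self hinj hi]
    · rw [if_neg hcase, hj, hp, Lagrange.eval_basis_of_ne _ hjmem]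
      intro hij
      exact hcase (by rw [hj, hij])
  have hsum2 : ∑ y ∈ C.erase x, p.eval (innerProd n q x y)
      = ((C.erase x).filter (fun y => innerProd n q x y = α i)).card := by
    rw [Finset.sum_congr rfl hterm, Finset.sum_boole]
  -- x is not in the filter
  have hfilter : (C.filter (fun y => innerProd n q x y = α i))
      = (C.erase x).filter (fun y => innerProd n q x y = α i) := by
    rw [Finset.filter_erase, Finset.erase_eq_of_notMem]
    intro h
    have := (Finset.mem_filter.mp h).2
    rw [hipxx] at this
    exact absurd this.symm (ne_of_lt (hlt1 i hik))
  -- put everything together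
  rw [hsplit, hsum2, ← hfilter, hquadp] at hsum
  have key : (ρ (k + 1) * p.eval 1 + ρ i) * (C.card : ℝ)
      = p.eval 1 + ρ i * C.card := by
    rw [add_mul, mul_right_comm, hone, one_mul]
  rw [key] at hsum
  linarith [hsum]
end
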